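/- arXiv:1112.3135 — 2 statements merged into one kernel-verified Lean document; each statement's English description precedes it below -/
import Mathlib

section
/- Let F : C → D be a tensor functor between tensor categories that admits a left adjoint L and a right adjoint R related by R(X) ≅ (L(X^∨))^∨∨ appropriately (R(X) = right dual of L(left dual of X)). Then F is dominant (every object of D is a subobject of F(c) for some c) if and only if L is faithful, if and only if R is faithful. -/
/-! For `L ⊣ F`, a mono `Y ⟶ F X` factors through the unit `Y ⟶ F (L Y)`, so `F` is dominant
iff all units are mono, i.e. iff `L` is faithful; dually, `R` is faithful iff every object is a
quotient of some `F X`. A monoidal functor preserves duals, and taking mates in a rigid category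
turns monos into epis and back, so a mono `ᘁY ⟶ F X` dualises to an epi `F (Xᘁ) ⟶ Y`, and an
epi `F X ⟶ Yᘁ` to a mono `Y ⟶ F (ᘁX)`. -/

open CategoryTheory MonoidalCategory

/-- A functor is dominant if every object of the target is a subobject of the image of some
object of the source. -/
def CategoryTheory.Functor.Dominant {C D : Type*} [Category C] [Category D] (F : C ⥤ D) : Prop :=
  ∀ Y : D, ∃ (X : C) (f : Y ⟶ F.obj X), Mono f

namespace CategoryTheory

def Functor.Codominant {C D : Type*} [Category C] [Category D] (F : C ⥤ D) : Prop :=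
  ∀ Y : D, ∃ (X : C) (f : F.obj X ⟶ Y), Epi f

section Adjunction

variable {C D : Type*} [Category C] [Category D] {F : C ⥤ D}

lemma Adjunction.faithful_left_iff_dominant {L : D ⥤ C} (adj : L ⊣ F) :
    L.Faithful ↔ F.Dominant := by
  refine ⟨fun _ Y => ⟨L.obj Y, adj.unit.app Y, inferInstance⟩, fun hF => ?_⟩
  have (Y : D) : Mono (adj.unit.app Y) := by
    obtain ⟨X, f, _⟩ := hF Y
    have : Mono (adj.unit.app Y ≫ F.map (L.map f ≫ adj.counit.app X)) := by simpa
    exact mono_of_mono _ (F.map (L.map f ≫ adj.counit.app X))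
  exact adj.faithful_L_of_mono_unit_app

lemma Adjunction.faithful_right_iff_codominant {R : D ⥤ C} (adj : F ⊣ R) :
    R.Faithful ↔ F.Codominant := by
  refine ⟨fun _ Y => ⟨R.obj Y, adj.counit.app Y, inferInstance⟩, fun hF => ?_⟩
  have (Y : D) : Epi (adj.counit.app Y) := by
    obtain ⟨X, f, _⟩ := hF Y
    have : Epi (F.map (adj.unit.app X ≫ R.map f) ≫ adj.counit.app Y) := by simpa
    exact epi_of_epi (F.map (adj.unit.app X ≫ R.map f)) _
  exact adj.faithful_R_of_epi_counit_app

end Adjunction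

section Rigid

variable {C : Type*} [Category C] [MonoidalCategory C]

lemma mono_whiskerRight_of_hasLeftDual {X Y : C} (f : X ⟶ Y) [Mono f] (Z : C) [HasLeftDual Z] :
    Mono (f ▷ Z) :=
  have := (tensorRightAdjunction (ᘁZ) Z).rightAdjoint_preservesLimits
  (tensorRight Z).map_mono f

lemma epi_whiskerRight_of_hasRightDual {X Y : C} (f : X ⟶ Y) [Epi f] (Z : C) [HasRightDual Z] :
    Epi (f ▷ Z) :=
  have := (tensorRightAdjunction Z Zᘁ).leftAdjoint_preservesColimits
  (tensorRight Z).map_epi f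

-- Under `(Xᘁ ⟶ Z) ≃ (𝟙_ C ⟶ X ⊗ Z)`, precomposing with `fᘁ` becomes postcomposing with `f ▷ Z`.
lemma epi_rightAdjointMate_of_mono [LeftRigidCategory C] {X Y : C} [HasRightDual X]
    [HasRightDual Y] (f : X ⟶ Y) [Mono f] : Epi (fᘁ) := by
  refine ⟨fun {Z} u v huv => ?_⟩
  have mate_comp (w : Xᘁ ⟶ Z) :
      η_ Y Yᘁ ≫ Y ◁ (fᘁ ≫ w) = (η_ X Xᘁ ≫ X ◁ w) ≫ f ▷ Z := by
    rw [MonoidalCategory.whiskerLeft_comp, coevaluation_comp_rightAdjointMate_assoc,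
      Category.assoc, ← whisker_exchange]
  have := mono_whiskerRight_of_hasLeftDual f Z
  have h : η_ X Xᘁ ≫ X ◁ u = η_ X Xᘁ ≫ X ◁ v := by
    rw [← cancel_mono (f ▷ Z), ← mate_comp, ← mate_comp, huv]
  simpa using congrArg (tensorLeftHomEquiv (𝟙_ C) X Xᘁ Z).symm h

lemma mono_leftAdjointMate_of_epi [RightRigidCategory C] {X Y : C} [HasLeftDual X]
    [HasLeftDual Y] (f : X ⟶ Y) [Epi f] : Mono (ᘁf) := by
  refine ⟨fun {Z} u v huv => ?_⟩
  have comp_mate (w : Z ⟶ ᘁY) :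
      X ◁ (w ≫ ᘁf) ≫ ε_ (ᘁX) X = f ▷ Z ≫ Y ◁ w ≫ ε_ (ᘁY) Y := by
    rw [MonoidalCategory.whiskerLeft_comp, Category.assoc, leftAdjointMate_comp_evaluation,
      ← whisker_exchange_assoc]
  have := epi_whiskerRight_of_hasRightDual f Z
  have h : Y ◁ u ≫ ε_ (ᘁY) Y = Y ◁ v ≫ ε_ (ᘁY) Y := by
    rw [← cancel_epi (f ▷ Z), ← comp_mate, ← comp_mate, huv]
  simpa using congrArg (tensorLeftHomEquiv Z (ᘁY) Y (𝟙_ C)) h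

variable {D : Type*} [Category D] [MonoidalCategory D]

open Functor.LaxMonoidal Functor.OplaxMonoidal in
abbrev ExactPairing.map (F : C ⥤ D) [F.Monoidal] (X Y : C) [ExactPairing X Y] :
    ExactPairing (F.obj X) (F.obj Y) where
  coevaluation' := ε F ≫ F.map (η_ X Y) ≫ δ F X Y
  evaluation' := μ F Y X ≫ F.map (ε_ X Y) ≫ η F
  -- `F` maps the zigzag identity of `C` to that of `D` up to the invertible `μ`, `δ` around it.
  coevaluation_evaluation' := by
    have h := F.congr_map (ExactPairing.coevaluation_evaluation X Y)
    simp only [Functor.map_comp, Functor.Monoidal.map_whiskerLeft,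
      Functor.Monoidal.map_whiskerRight, Functor.Monoidal.map_associator_inv,
      Functor.Monoidal.map_rightUnitor, Functor.Monoidal.map_leftUnitor_inv,
      Category.assoc, Functor.Monoidal.μ_δ_assoc, cancel_epi] at h
    simp only [← Category.assoc] at h
    replace h := (cancel_mono (μ F (𝟙_ C) Y)).mp h
    simp only [Category.assoc] at h
    simp only [MonoidalCategory.whiskerLeft_comp, comp_whiskerRight, Category.assoc,
      reassoc_of% h, Functor.Monoidal.whiskerLeft_ε_η_assoc,
      Functor.Monoidal.whiskerRight_ε_η, Category.comp_id]
  evaluation_coevaluation' := by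
    have h := F.congr_map (ExactPairing.evaluation_coevaluation X Y)
    simp only [Functor.map_comp, Functor.Monoidal.map_whiskerLeft,
      Functor.Monoidal.map_whiskerRight, Functor.Monoidal.map_associator,
      Functor.Monoidal.map_leftUnitor, Functor.Monoidal.map_rightUnitor_inv,
      Category.assoc, Functor.Monoidal.μ_δ_assoc, cancel_epi] at h
    simp only [← Category.assoc] at h
    replace h := (cancel_mono (μ F X (𝟙_ C))).mp h
    simp only [Category.assoc] at h
    simp only [MonoidalCategory.whiskerLeft_comp, comp_whiskerRight, Category.assoc,
      reassoc_of% h, Functor.Monoidal.whiskerRight_ε_η_assoc,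
      Functor.Monoidal.whiskerLeft_ε_η, Category.comp_id]

lemma Functor.Dominant.codominant [RightRigidCategory C] [LeftRigidCategory D] {F : C ⥤ D}
    [F.Monoidal] (hF : F.Dominant) : F.Codominant := by
  intro Y
  obtain ⟨X, m, _⟩ := hF (ᘁY)
  let := ExactPairing.map F X Xᘁ
  let : HasRightDual (F.obj X) := ⟨F.obj Xᘁ⟩
  exact ⟨Xᘁ, mᘁ, epi_rightAdjointMate_of_mono m⟩

lemma Functor.Codominant.dominant [LeftRigidCategory C] [RightRigidCategory D] {F : C ⥤ D}
    [F.Monoidal] (hF : F.Codominant) : F.Dominant := by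
  intro Y
  obtain ⟨X, e, _⟩ := hF Yᘁ
  let := ExactPairing.map F (ᘁX) X
  let : HasLeftDual (F.obj X) := ⟨F.obj (ᘁX)⟩
  exact ⟨ᘁX, ᘁe, mono_leftAdjointMate_of_epi e⟩

end Rigid

end CategoryTheory

theorem dominant_iff_faithful_adjoints_general
    {C D : Type*}
    [Category C] [MonoidalCategory C] [RigidCategory C]
    [Category D] [MonoidalCategory D] [RigidCategory D]
    (F : C ⥤ D) [F.Monoidal]
    (L R : D ⥤ C) (adjL : L ⊣ F) (adjR : F ⊣ R) :
    (F.Dominant ↔ L.Faithful) ∧ (L.Faithful ↔ R.Faithful) := by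
  have hL := adjL.faithful_left_iff_dominant
  have hDC : F.Dominant ↔ F.Codominant :=
    ⟨Functor.Dominant.codominant, Functor.Codominant.dominant⟩
  exact ⟨hL.symm, hL.trans (hDC.trans adjR.faithful_right_iff_codominant.symm)⟩

/-- Let `F : C → D` be a tensor functor between tensor categories with left
adjoint `L` and right adjoint `R`, related by `R(X) ≅ (L(ᘁX))ᘁ`.  Then `F` is dominant iff
`L` is faithful, iff `R` is faithful. -/
theorem dominant_iff_faithful_adjoints
    {k : Type*} [Field k] {C D : Type*}
    [Category C] [Abelian C] [Linear k C] [MonoidalCategory C] [MonoidalPreadditive C]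
    [MonoidalLinear k C] [RigidCategory C]
    [Category D] [Abelian D] [Linear k D] [MonoidalCategory D] [MonoidalPreadditive D]
    [MonoidalLinear k D] [RigidCategory D]
    (F : C ⥤ D) [F.Monoidal] [F.Additive] [F.Linear k]
    [Limits.PreservesFiniteLimits F] [Limits.PreservesFiniteColimits F]
    (L R : D ⥤ C) (adjL : L ⊣ F) (adjR : F ⊣ R)
    (hLR : ∀ X : D, Nonempty (R.obj X ≅ (L.obj (ᘁX))ᘁ)) :
    (F.Dominant ↔ L.Faithful) ∧ (L.Faithful ↔ R.Faithful) :=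
  dominant_iff_faithful_adjoints_general F L R adjL adjR
end

section
/- Let H be a finite-dimensional Hopf algebra over k, let A = (H, Δ) be the coalgebra H regarded as an algebra-object in CoRep H via its coproduct, and let σ be the half-braiding on A defined by σ_V(h ⊗ v) = v₍₀₎ ⊗ S(v₍₁₎) h v₍₂₎ for a right H-comodule V. Suppose c is a braiding on CoRep H, with coquasitriangular structure r : H ⊗ H → k, such that c_{A,−} = σ. Then r = ε ⊗ ε, H is commutative, and c is the standard symmetry (flip). -/
open TensorProduct Coalgebra

noncomputable section

variable (k : Type*) [Field k] (H : Type*) [Ring H] [HopfAlgebra k H]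

/-- Multiplication of `H` as a linear map. -/
abbrev mulMap : H ⊗[k] H →ₗ[k] H := LinearMap.mul' k H

/-- The flip `H ⊗ H → H ⊗ H`. -/
abbrev commHH : H ⊗[k] H →ₗ[k] H ⊗[k] H := (TensorProduct.comm k H H).toLinearMap

/-- `a ⊗ b ↦ (a₁ ⊗ b₁) ⊗ (a₂ ⊗ b₂)` (Sweedler notation). -/
abbrev D2 : H ⊗[k] H →ₗ[k] (H ⊗[k] H) ⊗[k] (H ⊗[k] H) :=
  (TensorProduct.tensorTensorTensorComm k H H H H).toLinearMap ∘ₗ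
    TensorProduct.map (comul (R := k)) (comul (R := k))

/-- `r ⊗ r` followed by multiplication in `k`. -/
abbrev rr (r : H ⊗[k] H →ₗ[k] k) : (H ⊗[k] H) ⊗[k] (H ⊗[k] H) →ₗ[k] k :=
  LinearMap.mul' k k ∘ₗ TensorProduct.map r r

/-- `ε ⊗ ε` as a linear form on `H ⊗ H`. -/
abbrev epseps : H ⊗[k] H →ₗ[k] k :=
  LinearMap.mul' k k ∘ₗ TensorProduct.map (counit (R := k)) (counit (R := k))

/-- `(g₂ ⊗ g₃) ⊗ h ↦ S(g₂) h g₃`. -/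
abbrev sandwich : (H ⊗[k] H) ⊗[k] H →ₗ[k] H :=
  mulMap k H ∘ₗ
    TensorProduct.map (mulMap k H ∘ₗ
      TensorProduct.map (HopfAlgebra.antipode (R := k)) LinearMap.id) LinearMap.id ∘ₗ
    (TensorProduct.assoc k H H H).symm.toLinearMap ∘ₗ
    TensorProduct.map LinearMap.id (commHH k H) ∘ₗ
    (TensorProduct.assoc k H H H).toLinearMap

/-- The half-braiding `σ` on `A = (H, Δ)`, evaluated on the regular comodule:
`h ⊗ g ↦ g₁ ⊗ S(g₂) h g₃`. -/
abbrev sigmaMap : H ⊗[k] H →ₗ[k] H ⊗[k] H :=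
  TensorProduct.map LinearMap.id (sandwich k H) ∘ₗ
    (TensorProduct.assoc k H (H ⊗[k] H) H).toLinearMap ∘ₗ
    TensorProduct.map (TensorProduct.map LinearMap.id (comul (R := k))) LinearMap.id ∘ₗ
    TensorProduct.map (comul (R := k)) LinearMap.id ∘ₗ
    commHH k H

/-- The braiding on the regular corepresentation: `h ⊗ g ↦ r(h₂, g₂) • (g₁ ⊗ h₁)`. -/
abbrev braidMap (r : H ⊗[k] H →ₗ[k] k) : H ⊗[k] H →ₗ[k] H ⊗[k] H :=
  (TensorProduct.rid k (H ⊗[k] H)).toLinearMap ∘ₗ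
    TensorProduct.map (commHH k H) r ∘ₗ D2 k H

/-! Apply `ε ⊗ ε` to both sides of `c_{A,A} = σ_A`. By the counit axiom it turns
`h ⊗ g ↦ r(h₂, g₂) g₁ ⊗ h₁` into `r`, and since `ε ∘ S = ε` it turns
`h ⊗ g ↦ g₁ ⊗ S(g₂) h g₃` into `ε ⊗ ε`; hence `r = ε ⊗ ε`. With this `r`, the counit axiom
collapses quasi-commutativity `r(a₁, b₁) a₂ b₂ = b₁ a₁ r(a₂, b₂)` to `ab = ba`, and the braiding
to the flip. -/

section CounitLaws

variable {R C M : Type*} [CommSemiring R] [AddCommMonoid C] [Module R C] [Coalgebra R C]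
  [AddCommMonoid M] [Module R M]

theorem lid_comp_map_counit_comp_comul (f : C →ₗ[R] M) :
    (TensorProduct.lid R M).toLinearMap ∘ₗ TensorProduct.map counit f ∘ₗ comul = f := by
  ext x
  simp [← LinearMap.lTensor_comp_rTensor, rTensor_counit_comul]

theorem rid_comp_map_counit_comp_comul (f : C →ₗ[R] M) :
    (TensorProduct.rid R M).toLinearMap ∘ₗ TensorProduct.map f counit ∘ₗ comul = f := by
  ext x
  simp [← LinearMap.rTensor_comp_lTensor, lTensor_counit_comul]

theorem mul'_map_counit_counit_comul (x : C) :
    LinearMap.mul' R R (TensorProduct.map counit counit (comul x)) = counit x := by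
  have hmul' : LinearMap.mul' R R = (TensorProduct.lid R R).toLinearMap := by ext; simp
  rw [hmul']
  exact LinearMap.congr_fun (lid_comp_map_counit_comp_comul counit) x

end CounitLaws

theorem D2_eq_comul : D2 k H = comul := rfl

theorem epseps_tmul (a b : H) : epseps k H (a ⊗ₜ b) = counit a * counit b := rfl

theorem epseps_eq_counit : epseps k H = counit := by
  ext a b
  simp [mul_comm]

theorem epseps_comul (b : H) : epseps k H (comul b) = counit b :=
  mul'_map_counit_counit_comul b

theorem epseps_comp_commHH : epseps k H ∘ₗ commHH k H = epseps k H := by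
  ext a b
  simp [mul_comm]

theorem epseps_comp_braidMap (r : H ⊗[k] H →ₗ[k] k) : epseps k H ∘ₗ braidMap k H r = r := by
  have hflip : epseps k H ∘ₗ (TensorProduct.rid k (H ⊗[k] H)).toLinearMap ∘ₗ
      TensorProduct.map (commHH k H) r =
      (TensorProduct.lid k k).toLinearMap ∘ₗ TensorProduct.map (epseps k H) r := by
    apply TensorProduct.ext'
    intro p q
    have hp := LinearMap.congr_fun (epseps_comp_commHH k H) p
    simp only [LinearMap.comp_apply, LinearEquiv.coe_coe, map_tmul, rid_tmul, lid_tmul,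
      map_smul, smul_eq_mul] at hp ⊢
    rw [hp, mul_comm]
  calc epseps k H ∘ₗ braidMap k H r
      = (epseps k H ∘ₗ (TensorProduct.rid k (H ⊗[k] H)).toLinearMap ∘ₗ
          TensorProduct.map (commHH k H) r) ∘ₗ comul := rfl
    _ = r := by rw [hflip, epseps_eq_counit, LinearMap.comp_assoc, lid_comp_map_counit_comp_comul]

theorem counit_sandwich (y : H ⊗[k] H) (h : H) :
    counit (sandwich k H (y ⊗ₜ h)) = epseps k H y * counit h := by
  induction y with
  | zero => simp
  | tmul a b =>
    simp only [LinearEquiv.coe_coe, LinearMap.comp_apply, assoc_tmul, map_tmul, comm_tmul,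
      assoc_symm_tmul, LinearMap.id_apply, LinearMap.mul'_apply, Bialgebra.counit_mul,
      HopfAlgebra.counit_antipode]
    ring
  | add y z hy hz => simp only [add_tmul, map_add, hy, hz, add_mul]

theorem epseps_comp_sigmaMap : epseps k H ∘ₗ sigmaMap k H = epseps k H := by
  have hcounit : ∀ z : (H ⊗[k] H) ⊗[k] H,
      epseps k H (TensorProduct.map LinearMap.id (sandwich k H)
        (TensorProduct.assoc k H (H ⊗[k] H) H
          (TensorProduct.map (TensorProduct.map LinearMap.id comul) LinearMap.id z))) =
      LinearMap.mul' k k (TensorProduct.map (epseps k H) counit z) := by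
    intro z
    induction z using TensorProduct.induction_on with
    | zero => simp
    | tmul y h =>
      induction y with
      | zero => simp
      | tmul a b =>
        simp only [map_tmul, LinearMap.id_apply, assoc_tmul, epseps_tmul]
        rw [counit_sandwich, epseps_comul, LinearMap.mul'_apply, mul_assoc]
      | add y z hy hz => simp only [add_tmul, map_add, hy, hz]
    | add y z hy hz => simp only [map_add, hy, hz]
  apply TensorProduct.ext'
  intro h g
  have hσ : sigmaMap k H (h ⊗ₜ g) = TensorProduct.map LinearMap.id (sandwich k H)
      (TensorProduct.assoc k H (H ⊗[k] H) H
        (TensorProduct.map (TensorProduct.map LinearMap.id comul) LinearMap.id (comul g ⊗ₜ h))) :=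
    rfl
  rw [LinearMap.comp_apply, hσ, hcounit, map_tmul, LinearMap.mul'_apply, epseps_comul,
    epseps_tmul, mul_comm]

theorem eq_epseps_of_braidMap_eq_sigmaMap (r : H ⊗[k] H →ₗ[k] k)
    (h : braidMap k H r = sigmaMap k H) : r = epseps k H := by
  rw [← epseps_comp_braidMap k H r, h, epseps_comp_sigmaMap]

theorem braidMap_epseps : braidMap k H (epseps k H) = commHH k H := by
  rw [braidMap, epseps_eq_counit]
  exact rid_comp_map_counit_comp_comul _

theorem coquasitriangular_eq_sigma_implies_commutative
    (r : H ⊗[k] H →ₗ[k] k)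
    -- quasi-commutativity: `r(a₁, b₁) a₂ b₂ = b₁ a₁ r(a₂, b₂)`
    (hQC : (TensorProduct.lid k H).toLinearMap ∘ₗ TensorProduct.map r (mulMap k H) ∘ₗ D2 k H
      = (TensorProduct.rid k H).toLinearMap ∘ₗ
          TensorProduct.map (mulMap k H ∘ₗ commHH k H) r ∘ₗ D2 k H)
    -- the hypothesis `c_{A,A} = σ_A`
    (hmain : braidMap k H r = sigmaMap k H) :
    (∀ a b : H, r (a ⊗ₜ[k] b) = counit (R := k) a * counit (R := k) b)
      ∧ (∀ a b : H, a * b = b * a)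
      ∧ braidMap k H r = commHH k H := by
  obtain rfl : r = epseps k H := eq_epseps_of_braidMap_eq_sigmaMap k H r hmain
  have hcomm : mulMap k H = mulMap k H ∘ₗ commHH k H := by
    rwa [D2_eq_comul, epseps_eq_counit, lid_comp_map_counit_comp_comul,
      rid_comp_map_counit_comp_comul] at hQC
  exact ⟨epseps_tmul k H, fun a b => LinearMap.congr_fun hcomm (a ⊗ₜ b), braidMap_epseps k H⟩
end
end
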